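/- arXiv:1110.6487 — 3 statements merged into one kernel-verified Lean document; each statement's English description precedes it below -/
import Mathlib

section
/- For any 3×3 sign matrix Λ over the rationals (Λ_{ii} = 0, Λ_{ij} ∈ {-1,1} for i ≠ j), there exist diagonal rational matrices A, B, U, V with all diagonal entries of U nonzero such that Λ·A + Λ·B·Λ = U + V·Λ. -/
/-!
With zero diagonal, the `(i, i)` entry of the equation reads `u i = ∑ k, Λ i k * b k * Λ k i`,
and the `(i, j)` entry for `i ≠ j` reads `Λ i j * a j + Λ i l * b l * Λ l j = v i * Λ i j`,
`l` being the third index. The choice `b = (-Λ₁₂Λ₂₁, -Λ₀₂Λ₂₀, 2Λ₀₁Λ₁₀)` makes the six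
off-diagonal equations consistent: they are then solved by `a` and `v` built from the two cyclic
products `P = Λ₀₁Λ₁₂Λ₂₀` and `Q = Λ₀₂Λ₂₁Λ₁₀`, and every `u k` is a product of off-diagonal
entries, times `-2` for `u 2`.
-/

open Matrix

section

variable {R : Type*} [CommRing R]

theorem exists_mul_diagonal_add_mul_diagonal_mul_eq (Λ : Matrix (Fin 3) (Fin 3) R)
    (hdiag : ∀ i, Λ i i = 0) :
    ∃ a b v : Fin 3 → R,
      Λ * diagonal a + Λ * diagonal b * Λ =
        diagonal ![Λ 0 1 * Λ 1 0 * (Λ 0 2 * Λ 2 0), Λ 0 1 * Λ 1 0 * (Λ 1 2 * Λ 2 1),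
          -2 * (Λ 0 2 * Λ 2 0) * (Λ 1 2 * Λ 2 1)] + diagonal v * Λ := by
  set P := Λ 0 1 * Λ 1 2 * Λ 2 0
  set Q := Λ 0 2 * Λ 2 1 * Λ 1 0
  refine ⟨![0, P - Q, 2 * P + Q], ![-(Λ 1 2 * Λ 2 1), -(Λ 0 2 * Λ 2 0), 2 * (Λ 0 1 * Λ 1 0)],
    ![P + Q, 2 * P, -Q], ?_⟩
  ext i j
  fin_cases i <;> fin_cases j <;> simp [mul_apply, Fin.sum_univ_three, hdiag, P, Q] <;> ring

theorem exists_mul_diagonal_add_mul_diagonal_mul_eq_of_ne_zero [NoZeroDivisors R]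
    (h2 : (2 : R) ≠ 0) (Λ : Matrix (Fin 3) (Fin 3) R) (hdiag : ∀ i, Λ i i = 0)
    (hoff : ∀ i j, i ≠ j → Λ i j ≠ 0) :
    ∃ a b u v : Fin 3 → R, (∀ k, u k ≠ 0) ∧
      Λ * diagonal a + Λ * diagonal b * Λ = diagonal u + diagonal v * Λ := by
  obtain ⟨a, b, v, h⟩ := exists_mul_diagonal_add_mul_diagonal_mul_eq Λ hdiag
  refine ⟨a, b, _, v, fun k => ?_, h⟩
  fin_cases k <;> simp [h2, hoff]

end

theorem alignment_solvable_strong (Λ : Matrix (Fin 3) (Fin 3) ℚ)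
    (hdiag : ∀ i, Λ i i = 0)
    (hoff : ∀ i j, i ≠ j → Λ i j = 1 ∨ Λ i j = -1) :
    ∃ a b u v : Fin 3 → ℚ, (∀ k, u k ≠ 0) ∧
      Λ * Matrix.diagonal a + Λ * Matrix.diagonal b * Λ =
        Matrix.diagonal u + Matrix.diagonal v * Λ :=
  exists_mul_diagonal_add_mul_diagonal_mul_eq_of_ne_zero two_ne_zero Λ hdiag fun i j hij => by
    rcases hoff i j hij with h | h <;> norm_num [h]
end

section
/- For real SNR > 0 and α > 0 with α ≠ 1, the limit as SNR → ∞ of [ (1/4)·log(1 + SNR + SNR^α) + (1/4)·log(1 + SNR^{max(1-α,0)}) ] / ((1/2)·log SNR) equals max(1, α)/2 + max(1-α, 0)/2; in particular it equals 1 − α/2 when 0 < α < 1 and α/2 when α > 1. -/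
/-!
For `S ≥ 1` both arguments of the logarithms are squeezed between `S ^ e` and a constant multiple
of it, with `e = max 1 α` and `e = max (1 - α) 0` respectively. Since `log (c * S ^ e) / log S`
tends to `e` for every constant `c > 0`, each term contributes its exponent to the limit.
-/

open Filter Real Topology

lemma tendsto_log_const_mul_rpow_div_log {c : ℝ} (hc : 0 < c) (e : ℝ) :
    Tendsto (fun S => log (c * S ^ e) / log S) atTop (𝓝 e) := by
  have hconst : Tendsto (fun S => log c / log S) atTop (𝓝 0) := by
    simpa [div_eq_mul_inv] using tendsto_log_atTop.inv_tendsto_atTop.const_mul (log c)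
  refine (by simpa using hconst.add_const e : Tendsto _ atTop (𝓝 e)).congr' ?_
  filter_upwards [eventually_gt_atTop 1] with S hS
  have hS0 : 0 < S := one_pos.trans hS
  rw [log_mul hc.ne' (rpow_pos_of_pos hS0 e).ne', log_rpow hS0, add_div,
    mul_div_cancel_right₀ e (log_pos hS).ne']

lemma tendsto_log_div_log_of_rpow_bounds {f : ℝ → ℝ} {c C e : ℝ} (hc : 0 < c)
    (hf : ∀ᶠ S in atTop, c * S ^ e ≤ f S ∧ f S ≤ C * S ^ e) :
    Tendsto (fun S => log (f S) / log S) atTop (𝓝 e) := by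
  have hC : 0 < C := by
    obtain ⟨S, hSf, hS⟩ := (hf.and (eventually_gt_atTop 0)).exists
    exact pos_of_mul_pos_left ((mul_pos hc (rpow_pos_of_pos hS e)).trans_le
      (hSf.1.trans hSf.2)) (rpow_pos_of_pos hS e).le
  refine tendsto_of_tendsto_of_tendsto_of_le_of_le'
    (tendsto_log_const_mul_rpow_div_log hc e) (tendsto_log_const_mul_rpow_div_log hC e) ?_ ?_
  all_goals
    filter_upwards [hf, eventually_gt_atTop 1] with S hSf hS
    have hlower : 0 < c * S ^ e := mul_pos hc (rpow_pos_of_pos (one_pos.trans hS) e)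
    refine div_le_div_of_nonneg_right ?_ (log_pos hS).le
  · exact log_le_log hlower hSf.1
  · exact log_le_log (hlower.trans_le hSf.1) hSf.2

lemma rpow_max_le_one_add_add_rpow {S : ℝ} (hS : 1 ≤ S) (α : ℝ) :
    S ^ max 1 α ≤ 1 + S + S ^ α ∧ 1 + S + S ^ α ≤ 3 * S ^ max 1 α := by
  have hS0 : 0 ≤ S := zero_le_one.trans hS
  have hone : 1 ≤ S ^ max 1 α := one_le_rpow hS (zero_le_one.trans (le_max_left 1 α))
  have hlin : S ≤ S ^ max 1 α := by
    simpa using rpow_le_rpow_of_exponent_le hS (le_max_left 1 α)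
  have hpow : S ^ α ≤ S ^ max 1 α := rpow_le_rpow_of_exponent_le hS (le_max_right 1 α)
  refine ⟨?_, by linarith⟩
  rcases max_choice 1 α with h | h
  · rw [h, rpow_one]
    linarith [rpow_nonneg hS0 α]
  · rw [h]
    linarith

lemma rpow_le_one_add_rpow {S e : ℝ} (hS : 1 ≤ S) (he : 0 ≤ e) :
    S ^ e ≤ 1 + S ^ e ∧ 1 + S ^ e ≤ 2 * S ^ e := by
  have := one_le_rpow hS he
  constructor <;> linarith

theorem gdof_limit_general (α : ℝ) :
    Tendsto (fun SNR : ℝ =>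
        ((1 / 4) * Real.log (1 + SNR + SNR ^ α)
          + (1 / 4) * Real.log (1 + SNR ^ max (1 - α) 0)) / ((1 / 2) * Real.log SNR))
      atTop (nhds (max 1 α / 2 + max (1 - α) 0 / 2)) ∧
    (α < 1 → max 1 α / 2 + max (1 - α) 0 / 2 = 1 - α / 2) ∧
    (1 < α → max 1 α / 2 + max (1 - α) 0 / 2 = α / 2) := by
  have hsignal : Tendsto (fun S => log (1 + S + S ^ α) / log S) atTop (𝓝 (max 1 α)) :=
    tendsto_log_div_log_of_rpow_bounds (c := 1) (C := 3) one_pos <| by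
      filter_upwards [eventually_ge_atTop 1] with S hS
      simpa using rpow_max_le_one_add_add_rpow hS α
  have hinterference :
      Tendsto (fun S => log (1 + S ^ max (1 - α) 0) / log S) atTop (𝓝 (max (1 - α) 0)) :=
    tendsto_log_div_log_of_rpow_bounds (c := 1) (C := 2) one_pos <| by
      filter_upwards [eventually_ge_atTop 1] with S hS
      simpa using rpow_le_one_add_rpow hS (le_max_right (1 - α) 0)
  refine ⟨?_, fun h => ?_, fun h => ?_⟩
  · have hlimit : max 1 α / 2 + max (1 - α) 0 / 2 = (max 1 α + max (1 - α) 0) / 2 := by ring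
    rw [hlimit]
    refine ((hsignal.add hinterference).div_const 2).congr fun S => ?_
    ring
  · rw [max_eq_left h.le, max_eq_left (by linarith)]
    ring
  · rw [max_eq_right h.le, max_eq_right (by linarith)]
    ring

theorem gdof_limit (α : ℝ) (hα : 0 < α) (hα1 : α ≠ 1) :
    Tendsto (fun SNR : ℝ =>
        ((1 / 4) * Real.log (1 + SNR + SNR ^ α)
          + (1 / 4) * Real.log (1 + SNR ^ max (1 - α) 0)) / ((1 / 2) * Real.log SNR))
      atTop (nhds (max 1 α / 2 + max (1 - α) 0 / 2)) ∧
    (α < 1 → max 1 α / 2 + max (1 - α) 0 / 2 = 1 - α / 2) ∧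
    (1 < α → max 1 α / 2 + max (1 - α) 0 / 2 = α / 2) :=
  gdof_limit_general α
end

section
/- For every integer K ≥ 2 and all reals SNR ≥ 0 and 0 ≤ INR < 2, (1/2)·log(1 + SNR/(1+(K-1)·INR)) ≥ (1/4)·log(1 + SNR + INR) + (1/4)·log(1 + SNR/(1+INR)) − (1/4)·log(3·(K-1)²). -/
theorem negligible_interference_gap (SNR INR : ℝ) (hS : 0 ≤ SNR)
    (hI0 : 0 ≤ INR) (hI2 : INR < 2) (K : ℤ) (hK : 2 ≤ K) :
    (1 / 2) * Real.logb 2 (1 + SNR / (1 + ((K : ℝ) - 1) * INR)) ≥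
      (1 / 4) * Real.logb 2 (1 + SNR + INR)
        + (1 / 4) * Real.logb 2 (1 + SNR / (1 + INR))
        - (1 / 4) * Real.logb 2 (3 * ((K : ℝ) - 1) ^ 2) := by
  have hk : (1:ℝ) ≤ (K:ℝ) - 1 := by
    have : (2:ℝ) ≤ (K:ℝ) := by exact_mod_cast hK
    linarith
  set k : ℝ := (K:ℝ) - 1 with hkdef
  have hd1 : (0:ℝ) < 1 + k * INR := by nlinarith
  have hd2 : (0:ℝ) < 1 + INR := by linarith
  set A : ℝ := 1 + SNR / (1 + k * INR) with hA
  set B : ℝ := 1 + SNR + INR with hB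
  set C : ℝ := 1 + SNR / (1 + INR) with hC
  have hA1 : (1:ℝ) ≤ A := by
    have : 0 ≤ SNR / (1 + k * INR) := div_nonneg hS hd1.le
    rw [hA]; linarith
  have hB1 : (1:ℝ) ≤ B := by rw [hB]; linarith
  have hC1 : (1:ℝ) ≤ C := by
    have : 0 ≤ SNR / (1 + INR) := div_nonneg hS hd2.le
    rw [hC]; linarith
  have h1 : C ≤ k * A := by
    have hdiv : SNR / (1 + INR) ≤ (k * SNR) / (1 + k * INR) := by
      rw [div_le_div_iff₀ hd2 hd1]
      nlinarith
    have hkA : k * A = k + (k * SNR) / (1 + k * INR) := by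
      rw [hA]; ring
    rw [hC, hkA]; linarith
  have h2 : B ≤ 3 * (k * A) := by
    have hdiv : SNR ≤ (3 * k * SNR) / (1 + k * INR) := by
      rw [le_div_iff₀ hd1]
      nlinarith [mul_nonneg hS (by nlinarith : (0:ℝ) ≤ 3 * k - 1 - k * INR)]
    have hkA : 3 * (k * A) = 3 * k + (3 * k * SNR) / (1 + k * INR) := by
      rw [hA]; ring
    rw [hB, hkA]; linarith
  have key : B * C ≤ 3 * k ^ 2 * A ^ 2 := by
    calc B * C ≤ (3 * (k * A)) * (k * A) :=
          mul_le_mul h2 h1 (by linarith) (by nlinarith)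
      _ = 3 * k ^ 2 * A ^ 2 := by ring
  have hlog : Real.logb 2 (B * C) ≤ Real.logb 2 (3 * k ^ 2 * A ^ 2) :=
    Real.logb_le_logb_of_le one_lt_two (by nlinarith) key
  have e1 : Real.logb 2 (B * C) = Real.logb 2 B + Real.logb 2 C :=
    Real.logb_mul (by linarith) (by linarith)
  have e2 : Real.logb 2 (3 * k ^ 2 * A ^ 2)
      = Real.logb 2 (3 * k ^ 2) + 2 * Real.logb 2 A := by
    rw [Real.logb_mul (by nlinarith) (by nlinarith), Real.logb_pow]
    norm_num
  rw [e1, e2] at hlog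
  linarith
end
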